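/- Under assumption (H3), suppose ε_n = o(1/(N^t_n log N^s_n)), let (U_n, M_n) be solutions of the entropy-regularized finite MFG systems on the grids (S_n, T_n), and assume M_n → m in C([0,T]; P_1(R^d)). Then for every x ∈ R^d and all sequences x^n ∈ S_n, t^n ∈ T_n with x^n → x and t^n → T, one has U_n(x^n, t^n) → g(x, m(T)); equivalently, the upper and lower relaxed limits satisfy U*(x,T) = U_*(x,T) = g(x, m(T)) for all x ∈ R^d. -/

import Mathlib

open MeasureTheory Filter Topology Set
open scoped ENNReal

noncomputable section

/-! ### Continuous objects -/

/-- The path space `Γ = C([0,T]; ℝ^d)` with the uniform distance. -/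
abbrev PathSpace (T : ℝ) (d : ℕ) := C(Set.Icc (0 : ℝ) T, Fin d → ℝ)

/-- Evaluation of a path at time `t ∈ [0,T]` (times are clamped to `[0,T]`). -/
def ev {T : ℝ} {d : ℕ} (hT : 0 ≤ T) (γ : PathSpace T d) (t : ℝ) : Fin d → ℝ :=
  γ (Set.projIcc 0 T hT t)

/-- The Kantorovich–Rubinstein (Wasserstein-1) distance, via couplings. -/
def W1 {X : Type*} [MeasurableSpace X] [PseudoMetricSpace X] (μ ν : Measure X) : ℝ :=
  sInf {r : ℝ | ∃ γ : Measure (X × X), γ.map Prod.fst = μ ∧ γ.map Prod.snd = ν ∧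
    r = ∫ p, dist p.1 p.2 ∂γ}

/-- `m ∈ P₁(ℝ^d)`: a Borel probability measure with finite first moment. -/
def IsP1 {d : ℕ} (m : Measure (Fin d → ℝ)) : Prop :=
  IsProbabilityMeasure m ∧ (∫⁻ x, ‖x‖₊ ∂m) < ⊤

/-! ### The space/time grids and the associated finite MFG -/

/-- Space step `Δx_n = 1/N^s_n`. -/
def dxn (Ns : ℕ → ℕ) (n : ℕ) : ℝ := 1 / (Ns n : ℝ)

/-- Time step `Δt_n = T/N^t_n`. -/
def dtn (T : ℝ) (Nt : ℕ → ℕ) (n : ℕ) : ℝ := T / (Nt n : ℝ)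

/-- Indices of grid points: `i ∈ ℤ^d` with `|i|_∞ ≤ (N^s_n)²`. -/
def gridIdx (d : ℕ) (Ns : ℕ → ℕ) (n : ℕ) : Finset (Fin d → ℤ) :=
  Finset.Icc (fun _ => -(Ns n : ℤ) ^ 2) fun _ => (Ns n : ℤ) ^ 2

/-- The grid point `x_i = i Δx_n ∈ ℝ^d`. -/
def gpt (d : ℕ) (Ns : ℕ → ℕ) (n : ℕ) (i : Fin d → ℤ) : Fin d → ℝ :=
  fun j => (i j : ℝ) * dxn Ns n

/-- The simplex of probability vectors indexed by a finite set `A`. -/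
def gsimplex {ι : Type*} (A : Finset ι) : Set (ι → ℝ) :=
  {p | (∀ i, 0 ≤ p i) ∧ (∀ i ∉ A, p i = 0) ∧ ∑ i ∈ A, p i = 1}

/-- The (negative) entropy `Σ p log p` (with the convention `0 log 0 = 0`). -/
def entD {ι : Type*} (A : Finset ι) (p : ι → ℝ) : ℝ :=
  ∑ i ∈ A, p i * Real.log (p i)

/-- The measure on `ℝ^d` induced by masses `M` on the grid points. -/
def discMeas (d : ℕ) (Ns : ℕ → ℕ) (n : ℕ) (M : (Fin d → ℤ) → ℝ) :
    Measure (Fin d → ℝ) :=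
  ∑ i ∈ gridIdx d Ns n, ENNReal.ofReal (M i) • Measure.dirac (gpt d Ns n i)

/-- The discretized initial condition `M_{n,0}(x_i) = m₀(E_i^n)`, where `E_i^n` is the
cube of side `Δx_n` centered at `x_i` (a closed ball for the sup norm of `ℝ^d`). -/
def Mzero (d : ℕ) (Ns : ℕ → ℕ) (n : ℕ) (m0 : Measure (Fin d → ℝ)) (i : Fin d → ℤ) : ℝ :=
  (m0 (Metric.closedBall (gpt d Ns n i) (dxn Ns n / 2))).toReal

/-- The one-step entropy-penalized cost
`p ↦ Σ_j p(j) [Δt_n ℓ((x_j − x_i)/Δt_n) + U(j)] + ε_n E_n(p)`. -/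
def stepObj (d : ℕ) (T : ℝ) (Ns Nt : ℕ → ℕ) (n : ℕ) (ℓ : (Fin d → ℝ) → ℝ) (εn : ℝ)
    (U1 : (Fin d → ℤ) → ℝ) (i : Fin d → ℤ) (p : (Fin d → ℤ) → ℝ) : ℝ :=
  (∑ j ∈ gridIdx d Ns n, p j *
      (dtn T Nt n * ℓ ((dtn T Nt n)⁻¹ • (gpt d Ns n j - gpt d Ns n i)) + U1 j)) +
    εn * entD (gridIdx d Ns n) p

/-- `(U, M, P)` solves the entropy-regularized finite MFG system on the `n`-th grid:
`P(k, i, ·)` is the unique minimizer of the one-step cost, `U` satisfies the dynamic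
programming equation, `M` is the induced marginal flow starting from the discretized
initial condition, and `U(N^t_n, ·)` is the terminal cost. -/
def SolvesDiscreteMFG (d : ℕ) (T : ℝ) (Ns Nt : ℕ → ℕ) (eps : ℕ → ℝ)
    (ℓ : (Fin d → ℝ) → ℝ) (f g : (Fin d → ℝ) → Measure (Fin d → ℝ) → ℝ)
    (m0 : Measure (Fin d → ℝ)) (n : ℕ)
    (U M : ℕ → (Fin d → ℤ) → ℝ) (P : ℕ → (Fin d → ℤ) → (Fin d → ℤ) → ℝ) : Prop :=
  (∀ k < Nt n, ∀ i ∈ gridIdx d Ns n,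
    P k i ∈ gsimplex (gridIdx d Ns n) ∧
    (∀ p ∈ gsimplex (gridIdx d Ns n),
      stepObj d T Ns Nt n ℓ (eps n) (U (k + 1)) i (P k i) ≤
        stepObj d T Ns Nt n ℓ (eps n) (U (k + 1)) i p) ∧
    (∀ p ∈ gsimplex (gridIdx d Ns n),
      (∀ p' ∈ gsimplex (gridIdx d Ns n),
        stepObj d T Ns Nt n ℓ (eps n) (U (k + 1)) i p ≤
          stepObj d T Ns Nt n ℓ (eps n) (U (k + 1)) i p') → p = P k i) ∧
    U k i = stepObj d T Ns Nt n ℓ (eps n) (U (k + 1)) i (P k i) +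
      dtn T Nt n * f (gpt d Ns n i) (discMeas d Ns n (M k))) ∧
  (∀ k < Nt n, ∀ j ∈ gridIdx d Ns n,
    M (k + 1) j = ∑ i ∈ gridIdx d Ns n, P k i j * M k i) ∧
  (∀ i ∈ gridIdx d Ns n, M 0 i = Mzero d Ns n m0 i) ∧
  (∀ i ∈ gridIdx d Ns n, U (Nt n) i = g (gpt d Ns n i) (discMeas d Ns n (M (Nt n)))) ∧
  (∀ k ≤ Nt n, M k ∈ gsimplex (gridIdx d Ns n))

/-- The weight of the discrete trajectory `s` under the kernel `P` with discretized
initial distribution: `M_{n,0}(s_0) Π_k P(s_k, s_{k+1}, t_k)`. -/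
def pathWeight (d : ℕ) (Ns Nt : ℕ → ℕ) (n : ℕ) (m0 : Measure (Fin d → ℝ))
    (P : ℕ → (Fin d → ℤ) → (Fin d → ℤ) → ℝ)
    (s : Fin (Nt n + 1) → Fin d → ℤ) : ℝ :=
  Mzero d Ns n m0 (s 0) * ∏ k : Fin (Nt n), P (k : ℕ) (s k.castSucc) (s k.succ)

/-- The probability measure `ξ_n` on `Γ` induced by the discrete MFG solution: the sum
over discrete trajectories of their weights times the Dirac mass at the corresponding
piecewise affine path `interp s`. -/
def xiMeas (d : ℕ) (T : ℝ) [MeasurableSpace (PathSpace T d)] (Ns Nt : ℕ → ℕ)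
    (m0 : Measure (Fin d → ℝ)) (n : ℕ)
    (P : ℕ → (Fin d → ℤ) → (Fin d → ℤ) → ℝ)
    (interp : (Fin (Nt n + 1) → Fin d → ℤ) → PathSpace T d) : Measure (PathSpace T d) :=
  ∑ s ∈ Fintype.piFinset (fun _ : Fin (Nt n + 1) => gridIdx d Ns n),
    ENNReal.ofReal (pathWeight d Ns Nt n m0 P s) • Measure.dirac (interp s)

/-!
Each backward step of the dynamic programming equation moves `U_n` away from the terminal
values `g(x_i, M_n(T))` by at most `C Δt_n + ε_n log |S_n|`: from above, compare the optimal
transition with the Dirac mass at the current point, which has zero entropy; from below, Young's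
inequality lets the coercive running cost `Δt_n ℓ((y - x)/Δt_n)` pay for the Lipschitz loss
`C_g |y - x|` of `g`, and Jensen bounds the entropy below by `-log |S_n|`. Summing over the steps
from `t_k` to `T` gives the error `C (T - t_k) + N^t_n ε_n log |S_n|`, which tends to `0` because
`log |S_n| = O(log N^s_n)`.

By Chapman–Kolmogorov along the discrete paths, the time-`T` marginal of `ξ_n` is exactly the
discrete measure `M_n(T)`, so `M_n(T) → m(T)` in `d_1` and continuity of `g` gives
`g(x^n, M_n(T)) → g(x, m(T))`.
-/

theorem mul_sub_mul_rpow_le {q a b u : ℝ} (hq : 1 < q) (ha : 0 ≤ a) (hb : 0 < b) (hu : 0 ≤ u) :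
    a * u - b * u ^ q ≤ a * (a / b) ^ (1 / (q - 1)) := by
  set u₀ := (a / b) ^ (1 / (q - 1))
  have hu₀ : 0 ≤ u₀ := by positivity
  rcases le_or_gt u u₀ with h | h
  · nlinarith [mul_le_mul_of_nonneg_left h ha, Real.rpow_nonneg hu q]
  · have hpow : a / b ≤ u ^ (q - 1) :=
      calc a / b = u₀ ^ (q - 1) := by
            rw [← Real.rpow_mul (by positivity), one_div_mul_cancel (by linarith), Real.rpow_one]
        _ ≤ u ^ (q - 1) := Real.rpow_le_rpow hu₀ h.le (by linarith)
    have hu_pos : 0 < u := hu₀.trans_lt h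
    have hqpow : u ^ q = u ^ (q - 1) * u := by
      rw [Real.rpow_sub_one hu_pos.ne', div_mul_cancel₀ _ hu_pos.ne']
    have : a * u ≤ b * u ^ q := by
      rw [hqpow, ← mul_assoc]
      exact mul_le_mul_of_nonneg_right ((div_le_iff₀' hb).1 hpow) hu
    nlinarith

theorem sub_le_mul_apply_inv_smul {E : Type*} [NormedAddCommGroup E] [NormedSpace ℝ E]
    {ℓ : E → ℝ} {q lo Cℓ L : ℝ} (hq : 1 < q) (hlo : 0 < lo) (hL : 0 ≤ L)
    (hℓ : ∀ α, lo * ‖α‖ ^ q - Cℓ ≤ ℓ α) {τ : ℝ} (hτ : 0 < τ) (z : E) :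
    L * ‖z‖ - (Cℓ + L * (L / lo) ^ (1 / (q - 1))) * τ ≤ τ * ℓ (τ⁻¹ • z) := by
  have hnorm : ‖τ⁻¹ • z‖ = ‖z‖ / τ := by
    rw [norm_smul, norm_inv, Real.norm_of_nonneg hτ.le, inv_mul_eq_div]
  have hgrowth := mul_le_mul_of_nonneg_left (hℓ (τ⁻¹ • z)) hτ.le
  have hyoung := mul_le_mul_of_nonneg_left
    (mul_sub_mul_rpow_le hq hL hlo (div_nonneg (norm_nonneg z) hτ.le)) hτ.le
  rw [hnorm] at hgrowth
  have hz : ‖z‖ = τ * (‖z‖ / τ) := (mul_div_cancel₀ _ hτ.ne').symm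
  nlinarith

theorem neg_log_card_le_entD {ι : Type*} {A : Finset ι} {p : ι → ℝ} (hp : p ∈ gsimplex A) :
    -Real.log A.card ≤ entD A p := by
  obtain ⟨hnn, -, hsum⟩ := hp
  have hA : (0 : ℝ) < A.card :=
    Nat.cast_pos.2 <| Finset.card_pos.2 <| Finset.nonempty_of_sum_ne_zero (hsum ▸ one_ne_zero)
  have hJensen := Real.convexOn_mul_log.map_sum_le (t := A) (w := fun _ => (A.card : ℝ)⁻¹)
    (p := p) (fun _ _ => by positivity) (by simp [hA.ne']) (fun i _ => hnn i)
  simp only [smul_eq_mul, ← Finset.mul_sum, hsum, mul_one, Real.log_inv] at hJensen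
  exact le_of_mul_le_mul_left hJensen (inv_pos.2 hA)

theorem sub_mul_log_card_le_sum_mul_add_entD {ι : Type*} {A : Finset ι} {p : ι → ℝ}
    (hp : p ∈ gsimplex A) {ε a : ℝ} (hε : 0 ≤ ε) {w : ι → ℝ} (hw : ∀ j ∈ A, a ≤ w j) :
    a - ε * Real.log A.card ≤ ∑ j ∈ A, p j * w j + ε * entD A p := by
  have hmean : a ≤ ∑ j ∈ A, p j * w j := by
    calc a = ∑ j ∈ A, p j * a := by rw [← Finset.sum_mul, hp.2.2, one_mul]
      _ ≤ ∑ j ∈ A, p j * w j :=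
        Finset.sum_le_sum fun j hj => mul_le_mul_of_nonneg_left (hw j hj) (hp.1 j)
  nlinarith [neg_log_card_le_entD hp]

theorem single_mem_gsimplex {ι : Type*} [DecidableEq ι] {A : Finset ι} {i : ι} (hi : i ∈ A) :
    Pi.single i 1 ∈ gsimplex A := by
  refine ⟨fun j => ?_, fun j hj => Pi.single_eq_of_ne (ne_of_mem_of_not_mem hi hj).symm _, ?_⟩
  · by_cases h : j = i <;> simp [h]
  · simp [hi]

theorem Finset.sum_piFinset_const_succ {α M : Type*} [AddCommMonoid M] (A : Finset α) (N : ℕ)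
    (F : (Fin (N + 1) → α) → M) :
    ∑ s ∈ Fintype.piFinset (fun _ : Fin (N + 1) => A), F s =
      ∑ j ∈ A, ∑ s ∈ Fintype.piFinset (fun _ : Fin N => A), F (Fin.snoc s j) := by
  have h := Finset.filter_piFinset_eq_map_snocEquiv (fun _ : Fin (N + 1) => A) (fun _ => True)
  simp only [Finset.filter_true] at h
  rw [h, Finset.sum_map, Finset.sum_product]
  rfl

theorem Finset.sum_piFinset_chain_mul {α R : Type*} [CommSemiring R] (A : Finset α)
    (μ : α → R) (Q : ℕ → α → α → R) (ν : ℕ → α → R) (N : ℕ)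
    (h0 : ∀ i ∈ A, ν 0 i = μ i)
    (hstep : ∀ k < N, ∀ j ∈ A, ν (k + 1) j = ∑ i ∈ A, Q k i j * ν k i) (G : α → R) :
    ∑ s ∈ Fintype.piFinset (fun _ : Fin (N + 1) => A),
        μ (s 0) * (∏ k : Fin N, Q k (s k.castSucc) (s k.succ)) * G (s (Fin.last N)) =
      ∑ j ∈ A, ν N j * G j := by
  induction N generalizing G with
  | zero =>
    rw [Finset.sum_piFinset_const_succ]
    refine Finset.sum_congr rfl fun j hj => ?_
    simp [h0 j hj, Fin.snoc_zero]
  | succ N ih =>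
    have hsplit : ∀ (s : Fin (N + 1) → α) (j : α),
        μ ((Fin.snoc s j : Fin (N + 2) → α) 0) *
            (∏ k : Fin (N + 1), Q k ((Fin.snoc s j : Fin (N + 2) → α) k.castSucc)
              ((Fin.snoc s j : Fin (N + 2) → α) k.succ)) *
            G ((Fin.snoc s j : Fin (N + 2) → α) (Fin.last (N + 1))) =
          μ (s 0) * (∏ k : Fin N, Q k (s k.castSucc) (s k.succ)) *
            (Q N (s (Fin.last N)) j * G j) := by
      intro s j
      simp only [Fin.snoc_apply_zero, Fin.snoc_last, Fin.snoc_castSucc, Fin.prod_univ_castSucc,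
        Fin.succ_last, Fin.succ_castSucc, Fin.val_castSucc, Fin.val_last]
      ring
    rw [Finset.sum_piFinset_const_succ, Finset.sum_comm]
    simp_rw [hsplit, ← Finset.mul_sum]
    rw [ih (fun k hk => hstep k (Nat.lt_succ_of_lt hk)) (fun i => ∑ j ∈ A, Q N i j * G j)]
    simp_rw [Finset.mul_sum]
    rw [Finset.sum_comm]
    refine Finset.sum_congr rfl fun j hj => ?_
    rw [hstep N N.lt_succ_self j hj, Finset.sum_mul]
    exact Finset.sum_congr rfl fun i _ => by ring

theorem MeasureTheory.Measure.map_sum_smul_dirac_of_factor {ι κ X Y : Type*} [MeasurableSpace X]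
    [MeasurableSpace Y] [DecidableEq κ] {F : Finset ι} {A : Finset κ} {w : ι → ℝ}
    (hw : ∀ s ∈ F, 0 ≤ w s) {π : ι → κ} (hπ : ∀ s ∈ F, π s ∈ A) {φ : X → Y}
    (hφ : Measurable φ) {γ : ι → X} {x : κ → Y} (hγ : ∀ s ∈ F, φ (γ s) = x (π s)) :
    (∑ s ∈ F, ENNReal.ofReal (w s) • Measure.dirac (γ s)).map φ =
      ∑ j ∈ A, ENNReal.ofReal (∑ s ∈ F with π s = j, w s) • Measure.dirac (x j) := by
  rw [Measure.map_finset_sum hφ.aemeasurable, ← Finset.sum_fiberwise_of_maps_to hπ]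
  refine Finset.sum_congr rfl fun j _ => ?_
  rw [ENNReal.ofReal_sum_of_nonneg fun s hs => hw s (Finset.mem_filter.1 hs).1, Finset.sum_smul]
  refine Finset.sum_congr rfl fun s hs => ?_
  obtain ⟨hsF, rfl⟩ := Finset.mem_filter.1 hs
  rw [Measure.map_smul, Measure.map_dirac' hφ, hγ s hsF]

theorem W1_comm {X : Type*} [MeasurableSpace X] [PseudoMetricSpace X] (μ ν : Measure X) :
    W1 μ ν = W1 ν μ := by
  have hswap : ∀ (μ ν : Measure X) (r : ℝ), (∃ γ : Measure (X × X), γ.map Prod.fst = μ ∧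
      γ.map Prod.snd = ν ∧ r = ∫ p, dist p.1 p.2 ∂γ) → ∃ γ : Measure (X × X),
      γ.map Prod.fst = ν ∧ γ.map Prod.snd = μ ∧ r = ∫ p, dist p.1 p.2 ∂γ := by
    rintro μ ν r ⟨γ, rfl, rfl, rfl⟩
    refine ⟨γ.map (MeasurableEquiv.prodComm : X × X ≃ᵐ X × X), ?_, ?_, ?_⟩
    · exact Measure.map_map measurable_fst MeasurableEquiv.prodComm.measurable
    · exact Measure.map_map measurable_snd MeasurableEquiv.prodComm.measurable
    · rw [integral_map_equiv]
      exact integral_congr_ae (Eventually.of_forall fun p => dist_comm _ _)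
  unfold W1
  congr 1
  ext r
  exact ⟨hswap μ ν r, hswap ν μ r⟩

theorem tendsto_apply_of_W1 {d : ℕ} {g : (Fin d → ℝ) → Measure (Fin d → ℝ) → ℝ}
    {x : Fin d → ℝ} {μ : Measure (Fin d → ℝ)}
    (hg : ∀ ε > (0 : ℝ), ∃ δ > (0 : ℝ), ∀ y m', IsP1 m' →
      ‖y - x‖ < δ → W1 μ m' < δ → |g y m' - g x μ| < ε)
    {ι : Type*} {l : Filter ι} {y : ι → Fin d → ℝ} {μs : ι → Measure (Fin d → ℝ)}
    (hμs : ∀ i, IsP1 (μs i)) (hy : Tendsto y l (𝓝 x)) (hW : ∀ δ > 0, ∀ᶠ i in l, W1 μ (μs i) < δ) :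
    Tendsto (fun i => g (y i) (μs i)) l (𝓝 (g x μ)) := by
  refine Metric.tendsto_nhds.2 fun ε hε => ?_
  obtain ⟨δ, hδ, hgδ⟩ := hg ε hε
  filter_upwards [hW δ hδ, Metric.tendsto_nhds.1 hy δ hδ] with i hWi hyi
  exact hgδ _ _ (hμs i) (by rwa [← dist_eq_norm]) hWi

theorem discMeas_isP1 {d : ℕ} {Ns : ℕ → ℕ} {n : ℕ} {M : (Fin d → ℤ) → ℝ}
    (hM : M ∈ gsimplex (gridIdx d Ns n)) : IsP1 (discMeas d Ns n M) := by
  refine ⟨⟨?_⟩, ?_⟩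
  · simp only [discMeas, Measure.coe_finsetSum, Finset.sum_apply, Measure.coe_smul,
      Pi.smul_apply, measure_univ, smul_eq_mul, mul_one]
    rw [← ENNReal.ofReal_sum_of_nonneg fun i _ => hM.1 i, hM.2.2, ENNReal.ofReal_one]
  · simp only [discMeas, lintegral_finsetSum_measure, lintegral_smul_measure, lintegral_dirac,
      smul_eq_mul]
    exact ENNReal.sum_lt_top.2 fun i _ => ENNReal.mul_lt_top ENNReal.ofReal_lt_top ENNReal.coe_lt_top

theorem dtn_pos {T : ℝ} {Nt : ℕ → ℕ} {n : ℕ} (hT : 0 < T) (hNt : 0 < Nt n) : 0 < dtn T Nt n :=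
  div_pos hT (Nat.cast_pos.2 hNt)

theorem card_gridIdx (d : ℕ) (Ns : ℕ → ℕ) (n : ℕ) :
    (gridIdx d Ns n).card = (2 * Ns n ^ 2 + 1) ^ d := by
  simp only [gridIdx, Pi.card_Icc, Int.card_Icc, Finset.prod_const, Finset.card_univ,
    Fintype.card_fin]
  congr 1
  have hsq : (Ns n : ℤ) ^ 2 = (Ns n ^ 2 : ℕ) := by push_cast; ring
  omega

theorem log_card_gridIdx_nonneg (d : ℕ) (Ns : ℕ → ℕ) (n : ℕ) :
    0 ≤ Real.log (gridIdx d Ns n).card := by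
  refine Real.log_nonneg (Nat.one_le_cast.2 (Finset.card_pos.2 ⟨0, ?_⟩))
  simp [gridIdx, Finset.mem_Icc, Pi.le_def]

theorem log_card_gridIdx_le {d : ℕ} {Ns : ℕ → ℕ} {n : ℕ} (h : 2 ≤ Ns n) :
    Real.log (gridIdx d Ns n).card ≤ 4 * d * Real.log (Ns n) := by
  have h' : (2 : ℝ) ≤ Ns n := by exact_mod_cast h
  have hsq : (4 : ℝ) ≤ (Ns n : ℝ) ^ 2 := by nlinarith
  have hle : (2 * Ns n ^ 2 + 1 : ℝ) ≤ (Ns n : ℝ) ^ 4 := by nlinarith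
  rw [card_gridIdx, Nat.cast_pow, Real.log_pow]
  calc (d : ℝ) * Real.log (2 * Ns n ^ 2 + 1 : ℕ) ≤ d * Real.log ((Ns n : ℝ) ^ 4) := by
        gcongr
        push_cast
        exact hle
    _ = 4 * d * Real.log (Ns n) := by rw [Real.log_pow]; push_cast; ring

theorem tendsto_mul_log_card_gridIdx {d : ℕ} {Ns Nt : ℕ → ℕ} {eps : ℕ → ℝ}
    (hNs : Tendsto (fun n => (Ns n : ℝ)) atTop atTop) (heps : ∀ n, 0 ≤ eps n)
    (hepsO : Tendsto (fun n => eps n * ((Nt n : ℝ) * Real.log (Ns n))) atTop (𝓝 0)) :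
    Tendsto (fun n => (Nt n : ℝ) * (eps n * Real.log (gridIdx d Ns n).card)) atTop (𝓝 0) := by
  refine squeeze_zero' (Eventually.of_forall fun n =>
    mul_nonneg (Nat.cast_nonneg _) (mul_nonneg (heps n) (log_card_gridIdx_nonneg d Ns n)))
    ?_ (by simpa using hepsO.const_mul (4 * d : ℝ))
  filter_upwards [hNs.eventually_ge_atTop 2] with n hn
  calc (Nt n : ℝ) * (eps n * Real.log (gridIdx d Ns n).card)
      ≤ Nt n * (eps n * (4 * d * Real.log (Ns n))) := by
        gcongr
        · exact heps n
        · exact log_card_gridIdx_le (by exact_mod_cast hn)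
    _ = 4 * d * (eps n * (Nt n * Real.log (Ns n))) := by ring

theorem tendsto_sub_mul_step_error {T C : ℝ} {Nt κ : ℕ → ℕ} {r : ℕ → ℝ} (hNt : ∀ n, 0 < Nt n)
    (hκ : ∀ n, κ n ≤ Nt n) (hr : ∀ n, 0 ≤ r n)
    (hκT : Tendsto (fun n => (κ n : ℝ) * dtn T Nt n) atTop (𝓝 T))
    (hr0 : Tendsto (fun n => (Nt n : ℝ) * r n) atTop (𝓝 0)) :
    Tendsto (fun n => ((Nt n : ℝ) - κ n) * (C * dtn T Nt n + r n)) atTop (𝓝 0) := by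
  have hsplit n : ((Nt n : ℝ) - κ n) * (C * dtn T Nt n + r n) =
      C * (T - κ n * dtn T Nt n) + ((Nt n : ℝ) - κ n) * r n := by
    have hT : (Nt n : ℝ) * dtn T Nt n = T := mul_div_cancel₀ T (Nat.cast_ne_zero.2 (hNt n).ne')
    linear_combination C * hT
  simp_rw [hsplit]
  have hmesh : Tendsto (fun n => C * (T - κ n * dtn T Nt n)) atTop (𝓝 0) := by
    simpa using ((tendsto_const_nhds (x := T)).sub hκT).const_mul C
  have hreg := squeeze_zero (fun n => mul_nonneg (sub_nonneg.2 (Nat.cast_le.2 (hκ n))) (hr n))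
    (fun n => mul_le_mul_of_nonneg_right (sub_le_self _ (Nat.cast_nonneg _)) (hr n)) hr0
  simpa using hmesh.add hreg

section PathMeasure

variable {d : ℕ} {T : ℝ} {Ns Nt : ℕ → ℕ} {n : ℕ}

theorem ev_eq_gpt_last (hT : 0 < T) (hNt : 0 < Nt n) {s : Fin (Nt n + 1) → Fin d → ℤ}
    {γ : PathSpace T d}
    (hγ : ∀ k : Fin (Nt n), ∀ t : ℝ,
      t ∈ Set.Icc (((k : ℕ) : ℝ) * dtn T Nt n) ((((k : ℕ) : ℝ) + 1) * dtn T Nt n) →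
      ev hT.le γ t = gpt d Ns n (s k.castSucc) +
        ((t - ((k : ℕ) : ℝ) * dtn T Nt n) / dtn T Nt n) •
          (gpt d Ns n (s k.succ) - gpt d Ns n (s k.castSucc))) :
    ev hT.le γ T = gpt d Ns n (s (Fin.last (Nt n))) := by
  let k : Fin (Nt n) := ⟨Nt n - 1, Nat.sub_lt hNt one_pos⟩
  have hk : k.succ = Fin.last (Nt n) := Fin.ext (Nat.sub_add_cancel hNt)
  have hdt := dtn_pos hT hNt
  have hkT : (((k : ℕ) : ℝ) + 1) * dtn T Nt n = T := by
    rw [show ((k : ℕ) : ℝ) + 1 = Nt n by exact_mod_cast Nat.sub_add_cancel hNt, dtn,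
      mul_div_cancel₀ _ (Nat.cast_ne_zero.2 hNt.ne')]
  have hcoef : (T - ((k : ℕ) : ℝ) * dtn T Nt n) / dtn T Nt n = 1 := by
    rw [div_eq_one_iff_eq hdt.ne']
    linear_combination -hkT
  rw [hγ k T ⟨by linarith [add_mul ((k : ℕ) : ℝ) 1 (dtn T Nt n)], hkT.ge⟩,
    hcoef, one_smul, add_sub_cancel, hk]

theorem sum_pathWeight_filter_last (m0 : Measure (Fin d → ℝ)) {M : ℕ → (Fin d → ℤ) → ℝ}
    {P : ℕ → (Fin d → ℤ) → (Fin d → ℤ) → ℝ}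
    (hM0 : ∀ i ∈ gridIdx d Ns n, M 0 i = Mzero d Ns n m0 i)
    (hM : ∀ k < Nt n, ∀ j ∈ gridIdx d Ns n,
      M (k + 1) j = ∑ i ∈ gridIdx d Ns n, P k i j * M k i)
    {j : Fin d → ℤ} (hj : j ∈ gridIdx d Ns n) :
    ∑ s ∈ Fintype.piFinset (fun _ : Fin (Nt n + 1) => gridIdx d Ns n)
        with s (Fin.last (Nt n)) = j, pathWeight d Ns Nt n m0 P s = M (Nt n) j := by
  have h := Finset.sum_piFinset_chain_mul _ _ _ _ _ hM0 hM fun i => if i = j then (1 : ℝ) else 0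
  simpa [Finset.sum_filter, pathWeight, hj] using h

theorem pathWeight_nonneg (m0 : Measure (Fin d → ℝ)) {P : ℕ → (Fin d → ℤ) → (Fin d → ℤ) → ℝ}
    (hP : ∀ k < Nt n, ∀ i ∈ gridIdx d Ns n, ∀ j, 0 ≤ P k i j) {s : Fin (Nt n + 1) → Fin d → ℤ}
    (hs : s ∈ Fintype.piFinset (fun _ : Fin (Nt n + 1) => gridIdx d Ns n)) :
    0 ≤ pathWeight d Ns Nt n m0 P s :=
  mul_nonneg ENNReal.toReal_nonneg <| Finset.prod_nonneg fun k _ =>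
    hP k k.isLt _ (Fintype.mem_piFinset.1 hs _) _

theorem map_xiMeas_ev_terminal (hT : 0 < T) [MeasurableSpace (PathSpace T d)]
    [BorelSpace (PathSpace T d)] {eps : ℕ → ℝ} {ℓ : (Fin d → ℝ) → ℝ}
    {f g : (Fin d → ℝ) → Measure (Fin d → ℝ) → ℝ} {m0 : Measure (Fin d → ℝ)} (hNt : 0 < Nt n) {U M : ℕ → (Fin d → ℤ) → ℝ} {P : ℕ → (Fin d → ℤ) → (Fin d → ℤ) → ℝ}
    (hsol : SolvesDiscreteMFG d T Ns Nt eps ℓ f g m0 n U M P)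
    {interp : (Fin (Nt n + 1) → Fin d → ℤ) → PathSpace T d}
    (hinterp : ∀ s : Fin (Nt n + 1) → Fin d → ℤ, ∀ k : Fin (Nt n), ∀ t : ℝ,
      t ∈ Set.Icc (((k : ℕ) : ℝ) * dtn T Nt n) ((((k : ℕ) : ℝ) + 1) * dtn T Nt n) →
      ev hT.le (interp s) t = gpt d Ns n (s k.castSucc) +
        ((t - ((k : ℕ) : ℝ) * dtn T Nt n) / dtn T Nt n) •
          (gpt d Ns n (s k.succ) - gpt d Ns n (s k.castSucc))) :
    (xiMeas d T Ns Nt m0 n P interp).map (fun γ => ev hT.le γ T) =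
      discMeas d Ns n (M (Nt n)) := by
  have hev : Measurable fun γ : PathSpace T d => ev hT.le γ T :=
    (continuous_eval_const (Set.projIcc 0 T hT.le T)).measurable
  rw [xiMeas, Measure.map_sum_smul_dirac_of_factor
    (fun s hs => pathWeight_nonneg m0 (fun k hk i hi => (hsol.1 k hk i hi).1.1) hs)
    (fun s hs => Fintype.mem_piFinset.1 hs _) hev
    (fun s _ => ev_eq_gpt_last hT hNt (hinterp s)), discMeas]
  exact Finset.sum_congr rfl fun j hj => by
    rw [sum_pathWeight_filter_last m0 hsol.2.2.1 hsol.2.1 hj]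

end PathMeasure

section StepCost

variable {d : ℕ} {T : ℝ} {Ns Nt : ℕ → ℕ} {n : ℕ} {ℓ : (Fin d → ℝ) → ℝ}

theorem stepObj_single (ε : ℝ) (U1 : (Fin d → ℤ) → ℝ) {i : Fin d → ℤ}
    (hi : i ∈ gridIdx d Ns n) :
    stepObj d T Ns Nt n ℓ ε U1 i (Pi.single i 1) = dtn T Nt n * ℓ 0 + U1 i := by
  have hent : entD (gridIdx d Ns n) (Pi.single i 1) = 0 :=
    Finset.sum_eq_zero fun j _ => by by_cases h : j = i <;> simp [h]
  simp [stepObj, hent, Pi.single_apply, hi]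

theorem abs_stepObj_sub_le {ε c L A : ℝ} (hε : 0 ≤ ε) {U1 V : (Fin d → ℤ) → ℝ}
    {i : Fin d → ℤ} (hi : i ∈ gridIdx d Ns n) {p : (Fin d → ℤ) → ℝ}
    (hp : p ∈ gsimplex (gridIdx d Ns n))
    (hmin : ∀ p' ∈ gsimplex (gridIdx d Ns n),
      stepObj d T Ns Nt n ℓ ε U1 i p ≤ stepObj d T Ns Nt n ℓ ε U1 i p')
    (hℓ0 : dtn T Nt n * ℓ 0 ≤ c)
    (hcoer : ∀ z, L * ‖z‖ - c ≤ dtn T Nt n * ℓ ((dtn T Nt n)⁻¹ • z))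
    (hV : ∀ j, V i - L * ‖gpt d Ns n j - gpt d Ns n i‖ ≤ V j)
    (hU1 : ∀ j ∈ gridIdx d Ns n, |U1 j - V j| ≤ A) :
    |stepObj d T Ns Nt n ℓ ε U1 i p - V i| ≤ A + c + ε * Real.log (gridIdx d Ns n).card := by
  have hlog := mul_nonneg hε (log_card_gridIdx_nonneg d Ns n)
  have hupper : stepObj d T Ns Nt n ℓ ε U1 i p ≤ V i + A + c := by
    have := hmin _ (single_mem_gsimplex hi)
    rw [stepObj_single ε U1 hi] at this
    linarith [(abs_le.1 (hU1 i hi)).2]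
  have hlower : V i - A - c - ε * Real.log (gridIdx d Ns n).card ≤
      stepObj d T Ns Nt n ℓ ε U1 i p :=
    sub_mul_log_card_le_sum_mul_add_entD hp hε fun j hj => by
      linarith [(abs_le.1 (hU1 j hj)).1, hV j, hcoer (gpt d Ns n j - gpt d Ns n i)]
  rw [abs_sub_le_iff]
  constructor <;> linarith

theorem abs_value_sub_terminal_le {eps : ℕ → ℝ} {f g : (Fin d → ℝ) → Measure (Fin d → ℝ) → ℝ}
    {m0 : Measure (Fin d → ℝ)} {U M : ℕ → (Fin d → ℤ) → ℝ}
    {P : ℕ → (Fin d → ℤ) → (Fin d → ℤ) → ℝ}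
    (hsol : SolvesDiscreteMFG d T Ns Nt eps ℓ f g m0 n U M P) (hdt : 0 ≤ dtn T Nt n)
    (heps : 0 ≤ eps n) {c L Cf : ℝ} (hℓ0 : ℓ 0 ≤ c)
    (hcoer : ∀ z, L * ‖z‖ - c * dtn T Nt n ≤ dtn T Nt n * ℓ ((dtn T Nt n)⁻¹ • z))
    (hf : ∀ m, IsP1 m → ∀ x, |f x m| ≤ Cf)
    (hg : ∀ m, IsP1 m → ∀ x y, |g x m - g y m| ≤ L * ‖x - y‖) {k : ℕ} (hk : k ≤ Nt n) :
    ∀ i ∈ gridIdx d Ns n, |U k i - g (gpt d Ns n i) (discMeas d Ns n (M (Nt n)))| ≤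
      ((Nt n : ℝ) - k) * ((c + Cf) * dtn T Nt n + eps n * Real.log (gridIdx d Ns n).card) := by
  have hμ k (hk : k ≤ Nt n) : IsP1 (discMeas d Ns n (M k)) := discMeas_isP1 (hsol.2.2.2.2 k hk)
  induction hk using Nat.decreasingInduction with
  | self => intro i hi; simp [hsol.2.2.2.1 i hi]
  | of_succ k hk ih =>
    intro i hi
    obtain ⟨hp, hmin, -, hU⟩ := hsol.1 k hk i hi
    have hgLip j : g (gpt d Ns n i) (discMeas d Ns n (M (Nt n))) -
        L * ‖gpt d Ns n j - gpt d Ns n i‖ ≤ g (gpt d Ns n j) (discMeas d Ns n (M (Nt n))) := by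
      linarith [(abs_le.1 (hg _ (hμ _ le_rfl) (gpt d Ns n j) (gpt d Ns n i))).1]
    have hstep := abs_stepObj_sub_le heps hi hp hmin
      ((mul_le_mul_of_nonneg_left hℓ0 hdt).trans_eq (mul_comm _ _)) hcoer hgLip ih
    have hfk : |dtn T Nt n * f (gpt d Ns n i) (discMeas d Ns n (M k))| ≤ dtn T Nt n * Cf := by
      rw [abs_mul, abs_of_nonneg hdt]
      exact mul_le_mul_of_nonneg_left (hf _ (hμ k hk.le) _) hdt
    rw [hU, add_sub_right_comm]
    refine (abs_add_le _ _).trans ?_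
    push_cast at hstep
    linear_combination hstep + hfk

end StepCost

theorem discrete_value_terminal_convergence_general
    (d : ℕ) (T : ℝ) (hT : 0 < T) (q : ℝ) (hq : 1 < q)
    [MeasurableSpace (PathSpace T d)] [BorelSpace (PathSpace T d)]
    -- (H3)(i)
    (ℓ : (Fin d → ℝ) → ℝ)
    (lo hi Cℓ : ℝ) (hlo : 0 < lo)
    (hgrowth : ∀ α : Fin d → ℝ, lo * ‖α‖ ^ q - Cℓ ≤ ℓ α ∧ ℓ α ≤ hi * ‖α‖ ^ q + Cℓ)
    -- (H3)(ii)
    (f g : (Fin d → ℝ) → Measure (Fin d → ℝ) → ℝ)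
    (Cb : ℝ) (hCb : 0 < Cb)
    (hbound : ∀ m, IsP1 m → ∀ x, |f x m| ≤ Cb ∧ |g x m| ≤ Cb)
    (hxLip : ∀ m, IsP1 m → ∀ x y,
      |f x m - f y m| ≤ Cb * ‖x - y‖ ∧ |g x m - g y m| ≤ Cb * ‖x - y‖)
    (hcont : ∀ x m, IsP1 m → ∀ ε > (0 : ℝ), ∃ δ > (0 : ℝ), ∀ y m', IsP1 m' →
      ‖y - x‖ < δ → W1 m m' < δ → |f y m' - f x m| < ε ∧ |g y m' - g x m| < ε)
    -- (H3)(iii)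
    (m0 : Measure (Fin d → ℝ))
    -- the grids
    (Ns Nt : ℕ → ℕ) (hNt : ∀ n, 0 < Nt n)
    (hNsInfty : Tendsto (fun n => (Ns n : ℝ)) atTop atTop)
    (eps : ℕ → ℝ) (heps : ∀ n, 0 < eps n)
    -- ε_n = o(1/(N^t_n log N^s_n))
    (hepsO : Tendsto (fun n => eps n * ((Nt n : ℝ) * Real.log (Ns n))) atTop (𝓝 0))
    -- the solutions of the finite MFGs and the induced path measures
    (U M : ℕ → ℕ → (Fin d → ℤ) → ℝ)
    (P : ℕ → ℕ → (Fin d → ℤ) → (Fin d → ℤ) → ℝ)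
    (hsol : ∀ n, SolvesDiscreteMFG d T Ns Nt eps ℓ f g m0 n (U n) (M n) (P n))
    (interp : (n : ℕ) → (Fin (Nt n + 1) → Fin d → ℤ) → PathSpace T d)
    (hinterp : ∀ n, ∀ s : Fin (Nt n + 1) → Fin d → ℤ, ∀ k : Fin (Nt n), ∀ t : ℝ,
      t ∈ Set.Icc (((k : ℕ) : ℝ) * dtn T Nt n) ((((k : ℕ) : ℝ) + 1) * dtn T Nt n) →
      ev hT.le (interp n s) t = gpt d Ns n (s k.castSucc) +
        ((t - ((k : ℕ) : ℝ) * dtn T Nt n) / dtn T Nt n) •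
          (gpt d Ns n (s k.succ) - gpt d Ns n (s k.castSucc)))
    -- the limit flow `m` and the convergence `M_n → m` in `C([0,T]; P₁(ℝ^d))`,
    -- where each `M_n` is extended to `[0,T]` as the marginal flow of `ξ_n`
    (m : ℝ → Measure (Fin d → ℝ)) (hm : ∀ t ∈ Set.Icc (0 : ℝ) T, IsP1 (m t))
    (hMconv : ∀ ε > (0 : ℝ), ∃ N₀ : ℕ, ∀ n ≥ N₀, ∀ t ∈ Set.Icc (0 : ℝ) T,
      W1 ((xiMeas d T Ns Nt m0 n (P n) (interp n)).map (fun γ => ev hT.le γ t)) (m t) ≤ ε) :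
    ∀ x : Fin d → ℝ, ∀ iseq : ℕ → Fin d → ℤ, ∀ κ : ℕ → ℕ,
      (∀ n, iseq n ∈ gridIdx d Ns n) → (∀ n, κ n ≤ Nt n) →
      Tendsto (fun n => gpt d Ns n (iseq n)) atTop (𝓝 x) →
      Tendsto (fun n => (κ n : ℝ) * dtn T Nt n) atTop (𝓝 T) →
      Tendsto (fun n => U n (κ n) (iseq n)) atTop (𝓝 (g x (m T))) := by
  intro x iseq κ hiseq hκ hx hκT
  have hterminal : Tendsto (fun n => g (gpt d Ns n (iseq n)) (discMeas d Ns n (M n (Nt n))))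
      atTop (𝓝 (g x (m T))) := by
    refine tendsto_apply_of_W1 (fun ε hε => ?_) (fun n => discMeas_isP1 ((hsol n).2.2.2.2 _ le_rfl))
      hx fun δ hδ => ?_
    · obtain ⟨δ, hδ, hgδ⟩ := hcont x (m T) (hm T ⟨hT.le, le_rfl⟩) ε hε
      exact ⟨δ, hδ, fun y m' hm' hy hW => (hgδ y m' hm' hy hW).2⟩
    · obtain ⟨N₀, hN₀⟩ := hMconv (δ / 2) (half_pos hδ)
      filter_upwards [eventually_ge_atTop N₀] with n hn
      rw [W1_comm, ← map_xiMeas_ev_terminal hT (hNt n) (hsol n) (hinterp n)]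
      exact (hN₀ n hn T ⟨hT.le, le_rfl⟩).trans_lt (half_lt_self hδ)
  set c := Cℓ + Cb * (Cb / lo) ^ (1 / (q - 1))
  have hℓ0 : ℓ 0 ≤ c := by
    have := (hgrowth 0).2
    rw [norm_zero, Real.zero_rpow (by linarith), mul_zero, zero_add] at this
    linarith [mul_nonneg hCb.le (Real.rpow_nonneg (div_nonneg hCb.le hlo.le) (1 / (q - 1)))]
  have herror := tendsto_sub_mul_step_error (C := c + Cb) hNt hκ
    (fun n => mul_nonneg (heps n).le (log_card_gridIdx_nonneg d Ns n)) hκT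
    (tendsto_mul_log_card_gridIdx hNsInfty (fun n => (heps n).le) hepsO)
  refine hterminal.congr_dist (squeeze_zero (fun _ => dist_nonneg) (fun n => ?_) herror)
  rw [dist_comm, Real.dist_eq]
  exact abs_value_sub_terminal_le (hsol n) (dtn_pos hT (hNt n)).le (heps n).le hℓ0
    (sub_le_mul_apply_inv_smul hq hlo hCb.le (fun α => (hgrowth α).1) (dtn_pos hT (hNt n)))
    (fun m hm x => (hbound m hm x).1) (fun m hm x y => (hxLip m hm x y).2) (hκ n) (iseq n)
    (hiseq n)

/-- Lemma 4.5(ii) of the paper: under (H3) and `ε_n = o(1/(N^t_n log N^s_n))`, if the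
extended marginal flows `M_n` converge to `m` in `C([0,T]; P₁(ℝ^d))`, then the value
functions converge at the terminal time: for all `x ∈ ℝ^d` and all sequences of grid
points `x^n → x` and grid times `t^n → T`, `U_n(x^n, t^n) → g(x, m(T))`; equivalently
the relaxed semilimits satisfy `U^*(x,T) = U_*(x,T) = g(x, m(T))`. -/
theorem discrete_value_terminal_convergence
    (d : ℕ) (T : ℝ) (hT : 0 < T) (q : ℝ) (hq : 1 < q)
    [MeasurableSpace (PathSpace T d)] [BorelSpace (PathSpace T d)]
    -- (H3)(i)
    (ℓ : (Fin d → ℝ) → ℝ) (hlcont : Continuous ℓ)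
    (lo hi Cℓ : ℝ) (hlo : 0 < lo) (hhi : 0 < hi) (hCℓ : 0 < Cℓ)
    (hgrowth : ∀ α : Fin d → ℝ, lo * ‖α‖ ^ q - Cℓ ≤ ℓ α ∧ ℓ α ≤ hi * ‖α‖ ^ q + Cℓ)
    -- (H3)(ii)
    (f g : (Fin d → ℝ) → Measure (Fin d → ℝ) → ℝ)
    (Cb : ℝ) (hCb : 0 < Cb)
    (hbound : ∀ m, IsP1 m → ∀ x, |f x m| ≤ Cb ∧ |g x m| ≤ Cb)
    (hxLip : ∀ m, IsP1 m → ∀ x y,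
      |f x m - f y m| ≤ Cb * ‖x - y‖ ∧ |g x m - g y m| ≤ Cb * ‖x - y‖)
    (hcont : ∀ x m, IsP1 m → ∀ ε > (0 : ℝ), ∃ δ > (0 : ℝ), ∀ y m', IsP1 m' →
      ‖y - x‖ < δ → W1 m m' < δ → |f y m' - f x m| < ε ∧ |g y m' - g x m| < ε)
    -- (H3)(iii)
    (m0 : Measure (Fin d → ℝ)) (hm0 : IsProbabilityMeasure m0)
    (hm0supp : ∃ R : ℝ, m0 (Metric.closedBall 0 R)ᶜ = 0)
    -- the grids
    (Ns Nt : ℕ → ℕ) (hNs : ∀ n, 0 < Ns n) (hNt : ∀ n, 0 < Nt n)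
    (hNsInfty : Tendsto (fun n => (Ns n : ℝ)) atTop atTop)
    (hNtInfty : Tendsto (fun n => (Nt n : ℝ)) atTop atTop)
    (eps : ℕ → ℝ) (heps : ∀ n, 0 < eps n)
    -- ε_n = o(1/(N^t_n log N^s_n))
    (hepsO : Tendsto (fun n => eps n * ((Nt n : ℝ) * Real.log (Ns n))) atTop (𝓝 0))
    -- the solutions of the finite MFGs and the induced path measures
    (U M : ℕ → ℕ → (Fin d → ℤ) → ℝ)
    (P : ℕ → ℕ → (Fin d → ℤ) → (Fin d → ℤ) → ℝ)
    (hsol : ∀ n, SolvesDiscreteMFG d T Ns Nt eps ℓ f g m0 n (U n) (M n) (P n))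
    (interp : (n : ℕ) → (Fin (Nt n + 1) → Fin d → ℤ) → PathSpace T d)
    (hinterp : ∀ n, ∀ s : Fin (Nt n + 1) → Fin d → ℤ, ∀ k : Fin (Nt n), ∀ t : ℝ,
      t ∈ Set.Icc (((k : ℕ) : ℝ) * dtn T Nt n) ((((k : ℕ) : ℝ) + 1) * dtn T Nt n) →
      ev hT.le (interp n s) t = gpt d Ns n (s k.castSucc) +
        ((t - ((k : ℕ) : ℝ) * dtn T Nt n) / dtn T Nt n) •
          (gpt d Ns n (s k.succ) - gpt d Ns n (s k.castSucc)))
    -- the limit flow `m` and the convergence `M_n → m` in `C([0,T]; P₁(ℝ^d))`,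
    -- where each `M_n` is extended to `[0,T]` as the marginal flow of `ξ_n`
    (m : ℝ → Measure (Fin d → ℝ)) (hm : ∀ t ∈ Set.Icc (0 : ℝ) T, IsP1 (m t))
    (hMconv : ∀ ε > (0 : ℝ), ∃ N₀ : ℕ, ∀ n ≥ N₀, ∀ t ∈ Set.Icc (0 : ℝ) T,
      W1 ((xiMeas d T Ns Nt m0 n (P n) (interp n)).map (fun γ => ev hT.le γ t)) (m t) ≤ ε) :
    ∀ x : Fin d → ℝ, ∀ iseq : ℕ → Fin d → ℤ, ∀ κ : ℕ → ℕ,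
      (∀ n, iseq n ∈ gridIdx d Ns n) → (∀ n, κ n ≤ Nt n) →
      Tendsto (fun n => gpt d Ns n (iseq n)) atTop (𝓝 x) →
      Tendsto (fun n => (κ n : ℝ) * dtn T Nt n) atTop (𝓝 T) →
      Tendsto (fun n => U n (κ n) (iseq n)) atTop (𝓝 (g x (m T))) :=
  discrete_value_terminal_convergence_general d T hT q hq ℓ lo hi Cℓ hlo hgrowth f g Cb hCb hbound
    hxLip hcont m0 Ns Nt hNt hNsInfty eps heps hepsO U M P hsol interp hinterp m hm hMconv
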